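/- For every c ∈ (0,√2), with λ = √(2−c²)/2 and ω = √(2+c²)/2, there exists a unique θ < 0 such that, setting t* = (1/ω)·(3π/2 − arctan((λθ + 1)/(ωθ))), one has e^{2λt*} = θ² + 2λθ + 1. (This unique value is denoted θ_min(c).) -/

import Mathlib

/-!
Write `R(θ) = θ² + 2λθ + 1` and `t*(θ)` for the crossing time. Because `λ² + ω² = 1`, the
derivative of `t*` is exactly `1 / R`, so `D(θ) = 2λ·t*(θ) − log R(θ)` has derivative
`−2θ / R(θ)` and is strictly increasing on `θ < 0`; the equation is `D(θ) = 0`. Since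
`π/ω < t* < 2π/ω`, the function `D` is positive at `θ = −λ`, where `R = ω² ≤ 1`, and
negative once `R(θ) ≥ exp(4πλ/ω)`. The intermediate value theorem gives the root.
-/

open Real Set

namespace ThetaMin

variable {lam ω : ℝ}

noncomputable def crossingTime (lam ω θ : ℝ) : ℝ :=
  (1 / ω) * (3 * π / 2 - arctan ((lam * θ + 1) / (ω * θ)))

noncomputable def crossingDefect (lam ω θ : ℝ) : ℝ :=
  2 * lam * crossingTime lam ω θ - log (θ ^ 2 + 2 * lam * θ + 1)

lemma quadratic_pos (hlam : lam ^ 2 < 1) (θ : ℝ) : 0 < θ ^ 2 + 2 * lam * θ + 1 := by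
  nlinarith [sq_nonneg (θ + lam)]

lemma crossingTime_mem_Ioo (hω : 0 < ω) (θ : ℝ) :
    crossingTime lam ω θ ∈ Ioo (π / ω) (2 * π / ω) := by
  have hlo := neg_pi_div_two_lt_arctan ((lam * θ + 1) / (ω * θ))
  have hhi := arctan_lt_pi_div_two ((lam * θ + 1) / (ω * θ))
  rw [crossingTime, one_div_mul_eq_div]
  exact ⟨(div_lt_div_iff_of_pos_right hω).2 (by linarith),
    (div_lt_div_iff_of_pos_right hω).2 (by linarith)⟩

lemma sq_lt_one_of_sq_add_sq (hω : ω ≠ 0) (hsum : lam ^ 2 + ω ^ 2 = 1) : lam ^ 2 < 1 := by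
  linarith [sq_pos_of_ne_zero hω]

lemma hasDerivAt_crossingTime (hω : ω ≠ 0) (hsum : lam ^ 2 + ω ^ 2 = 1) {θ : ℝ}
    (hθ : θ ≠ 0) :
    HasDerivAt (crossingTime lam ω) (1 / (θ ^ 2 + 2 * lam * θ + 1)) θ := by
  have hR := (quadratic_pos (sq_lt_one_of_sq_add_sq hω hsum) θ).ne'
  have hquot : HasDerivAt (fun x => (lam * x + 1) / (ω * x)) (-1 / (ω * θ ^ 2)) θ := by
    refine ((((hasDerivAt_id' θ).const_mul lam).add_const 1).div
      ((hasDerivAt_id' θ).const_mul ω) (mul_ne_zero hω hθ)).congr_deriv ?_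
    field_simp
    ring
  have hnorm :
      1 + ((lam * θ + 1) / (ω * θ)) ^ 2 = (θ ^ 2 + 2 * lam * θ + 1) / (ω * θ) ^ 2 := by
    field_simp
    linear_combination θ ^ 2 * hsum
  refine ((hquot.arctan.const_sub (3 * π / 2)).const_mul (1 / ω)).congr_deriv ?_
  rw [hnorm]
  field_simp

lemma hasDerivAt_crossingDefect (hω : ω ≠ 0) (hsum : lam ^ 2 + ω ^ 2 = 1) {θ : ℝ}
    (hθ : θ ≠ 0) :
    HasDerivAt (crossingDefect lam ω) (-2 * θ / (θ ^ 2 + 2 * lam * θ + 1)) θ := by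
  have hR := (quadratic_pos (sq_lt_one_of_sq_add_sq hω hsum) θ).ne'
  have hquad : HasDerivAt (fun x => x ^ 2 + 2 * lam * x + 1) (2 * θ + 2 * lam) θ := by
    simpa using ((hasDerivAt_pow 2 θ).add ((hasDerivAt_id' θ).const_mul (2 * lam))).add_const 1
  refine (((hasDerivAt_crossingTime hω hsum hθ).const_mul (2 * lam)).sub
    (hquad.log hR)).congr_deriv ?_
  field_simp
  ring

lemma continuousOn_crossingDefect (hω : ω ≠ 0) (hsum : lam ^ 2 + ω ^ 2 = 1) :
    ContinuousOn (crossingDefect lam ω) (Iio 0) := fun _ hθ =>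
  (hasDerivAt_crossingDefect hω hsum (ne_of_lt hθ)).continuousAt.continuousWithinAt

lemma strictMonoOn_crossingDefect (hω : ω ≠ 0) (hsum : lam ^ 2 + ω ^ 2 = 1) :
    StrictMonoOn (crossingDefect lam ω) (Iio 0) := by
  refine strictMonoOn_of_hasDerivWithinAt_pos (convex_Iio 0)
    (f' := fun θ => -2 * θ / (θ ^ 2 + 2 * lam * θ + 1)) (continuousOn_crossingDefect hω hsum)
    (fun θ hθ => ?_) (fun θ hθ => ?_) <;> rw [interior_Iio] at hθ
  · exact (hasDerivAt_crossingDefect hω hsum (ne_of_lt hθ)).hasDerivWithinAt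
  · exact div_pos (by linarith [hθ.out]) (quadratic_pos (sq_lt_one_of_sq_add_sq hω hsum) θ)

lemma crossingDefect_neg_lam_pos (hlam : 0 < lam) (hlam1 : lam ^ 2 ≤ 1) (hω : 0 < ω) :
    0 < crossingDefect lam ω (-lam) := by
  have htime : 0 < crossingTime lam ω (-lam) :=
    (div_pos pi_pos hω).trans (crossingTime_mem_Ioo hω (-lam)).1
  have hlog : log ((-lam) ^ 2 + 2 * lam * (-lam) + 1) ≤ 0 :=
    log_nonpos (by nlinarith) (by nlinarith)
  rw [crossingDefect]
  nlinarith [mul_pos hlam htime]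

lemma exists_crossingDefect_neg (hlam : 0 < lam) (hlam1 : lam ≤ 1) (hω : 0 < ω) :
    ∃ θ < -lam, crossingDefect lam ω θ < 0 := by
  set M := exp (4 * π * lam / ω)
  have hM : 1 < M := one_lt_exp_iff.2 (by positivity)
  have htime := (crossingTime_mem_Ioo (lam := lam) hω (-(M + 1))).2
  have hlog : 4 * π * lam / ω ≤ log ((-(M + 1)) ^ 2 + 2 * lam * (-(M + 1)) + 1) := by
    rw [← log_exp (4 * π * lam / ω)]
    exact log_le_log (by positivity) (by nlinarith)
  refine ⟨-(M + 1), by linarith, ?_⟩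
  have hbound : 2 * lam * crossingTime lam ω (-(M + 1)) < 4 * π * lam / ω := by
    calc 2 * lam * crossingTime lam ω (-(M + 1)) < 2 * lam * (2 * π / ω) := by gcongr
      _ = 4 * π * lam / ω := by ring
  rw [crossingDefect]
  linarith

lemma exp_crossingTime_eq_iff (hlam : lam ^ 2 < 1) (θ : ℝ) :
    exp (2 * lam * crossingTime lam ω θ) = θ ^ 2 + 2 * lam * θ + 1 ↔
      crossingDefect lam ω θ = 0 := by
  rw [crossingDefect, sub_eq_zero, ← exp_eq_exp (x := 2 * lam * _),
    exp_log (quadratic_pos hlam θ)]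

theorem existsUnique_exp_crossingTime_eq (hlam : 0 < lam) (hω : 0 < ω)
    (hsum : lam ^ 2 + ω ^ 2 = 1) :
    ∃! θ, θ < 0 ∧ exp (2 * lam * crossingTime lam ω θ) = θ ^ 2 + 2 * lam * θ + 1 := by
  have hlam2 := sq_lt_one_of_sq_add_sq hω.ne' hsum
  have hlam1 : lam < 1 := by nlinarith
  simp only [exp_crossingTime_eq_iff hlam2]
  have hmono := strictMonoOn_crossingDefect hω.ne' hsum
  obtain ⟨θ₀, hθ₀, hneg⟩ := exists_crossingDefect_neg hlam hlam1.le hω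
  have hIcc : Icc θ₀ (-lam) ⊆ Iio 0 := fun θ hθ => hθ.2.trans_lt (neg_neg_of_pos hlam)
  obtain ⟨θ, hθ, hzero⟩ := intermediate_value_Icc hθ₀.le
    ((continuousOn_crossingDefect hω.ne' hsum).mono hIcc)
    ⟨hneg.le, (crossingDefect_neg_lam_pos hlam hlam2.le hω).le⟩
  exact ⟨θ, ⟨hIcc hθ, hzero⟩,
    fun θ' hθ' => hmono.injOn hθ'.1 (hIcc hθ) (hθ'.2.trans hzero.symm)⟩

end ThetaMin

theorem stmt5 (c : ℝ) (hc : c ∈ Set.Ioo 0 (Real.sqrt 2))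
    (lam ω : ℝ) (hlam : lam = Real.sqrt (2 - c ^ 2) / 2)
    (hω : ω = Real.sqrt (2 + c ^ 2) / 2) :
    ∃! θ : ℝ, θ < 0 ∧
      Real.exp (2 * lam *
          ((1 / ω) * (3 * Real.pi / 2 - Real.arctan ((lam * θ + 1) / (ω * θ))))) =
        θ ^ 2 + 2 * lam * θ + 1 := by
  have hc2 : c ^ 2 < 2 := by
    simpa using pow_lt_pow_left₀ hc.2 hc.1.le two_ne_zero
  have hlam0 : 0 < lam := by rw [hlam]; positivity
  have hω0 : 0 < ω := by rw [hω]; positivity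
  have hsum : lam ^ 2 + ω ^ 2 = 1 := by
    rw [hlam, hω, div_pow, div_pow, sq_sqrt (by linarith), sq_sqrt (by positivity)]
    ring
  exact ThetaMin.existsUnique_exp_crossingTime_eq hlam0 hω0 hsum
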